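/- arXiv:2112.10013 — 4 statements merged into one kernel-verified Lean document; each statement's English description precedes it below -/
import Mathlib

section
/- The differential is given by a sum over shuffles fixing the first element: ∂ b_{j_1···j_s} = Σ_{p=1}^{s−1} Σ_{θ ∈ S̃(p,s−p)} ε(θ)(−1)^{|b_{I_θ}|+1} [b_{I_θ}, b_{L_θ}], where S̃(p,s−p) is the set of (p,s−p)-shuffles θ with θ(1)=1, I_θ = {j_{θ(1)},...,j_{θ(p)}}, L_θ = {j_{θ(p+1)},...,j_{θ(s)}}, and [x,y] = x⊗y − (−1)^{|x||y|} y⊗x is the graded commutator. -/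
private lemma odd_helper (E1 E2 a1 a2 : ℕ) (h : E1 + E2 = a1 * a2)
    (h1 : 1 ≤ a1) (h2 : 1 ≤ a2) :
    Odd ((E2 + a2) + (E1 + a1 + (a1 - 1) * (a2 - 1))) := by
  obtain ⟨c, rfl⟩ : ∃ c, a1 = 1 + c := ⟨a1 - 1, by omega⟩
  obtain ⟨d, rfl⟩ : ∃ d, a2 = 1 + d := ⟨a2 - 1, by omega⟩
  simp only [Nat.add_sub_cancel_left]
  have hx : (1 + c) * (1 + d) = 1 + c + d + c * d := by ring
  exact ⟨c * d + c + d + 1, by omega⟩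

private lemma neg_pow_helper (x y : ℕ) (h : Odd (x + y)) : ((-1:ℤ))^x = -(-1:ℤ)^y := by
  have h1 : ((-1:ℤ))^(x+y) = -1 := Odd.neg_one_pow h
  have h2 : ((-1:ℤ))^y * (-1:ℤ)^y = 1 := by
    rw [← pow_add]; exact Even.neg_one_pow ⟨y, rfl⟩
  calc ((-1:ℤ))^x = (-1:ℤ)^x * ((-1:ℤ)^y * (-1:ℤ)^y) := by rw [h2, mul_one]
    _ = ((-1:ℤ)^(x+y)) * (-1:ℤ)^y := by rw [pow_add]; ring
    _ = -(-1:ℤ)^y := by rw [h1]; ring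

/-- The unrestricted-sum formula for the cobar differential equals the sum over
shuffles fixing the first element of graded commutators:
`∂ b_J = Σ_{(I,L): I⊔L=J} ε(I,L)(−1)^{|b_I|+1} b_I ⊗ b_L
       = Σ_{(I,L): I⊔L=J, j_1∈I} ε(I,L)(−1)^{|b_I|+1} [b_I, b_L]`,
where `[x,y] = x⊗y − (−1)^{|x||y|} y⊗x`, `|b_I| = Σ_{i∈I} n_i − 1`, and
`ε(I,L) = (−1)^{Σ_{i∈I,l∈L,i>l} n_i n_l}`.  ((p,s−p)-shuffles with `θ(1)=1`
correspond exactly to ordered partitions `(I,L)` with `j_1 = min J ∈ I`.) -/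
theorem cobar_differential_shuffle_commutator_form
    {m : ℕ} (n : Fin m → ℕ) (hn : ∀ i, 2 ≤ n i)
    (A : Type*) [Ring A] (b : Finset (Fin m) → A)
    (J : Finset (Fin m)) (hJ : J.Nonempty) :
    ∑ I ∈ J.powerset.filter (fun I => I ≠ ∅ ∧ I ≠ J),
      (((-1 : ℤ) ^ (∑ i ∈ I, ∑ l ∈ J \ I, if l < i then n i * n l else 0)) *
        ((-1 : ℤ) ^ (∑ i ∈ I, n i))) • (b I * b (J \ I))
    = ∑ I ∈ J.powerset.filter (fun I => I ≠ ∅ ∧ I ≠ J ∧ J.min' hJ ∈ I),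
        (((-1 : ℤ) ^ (∑ i ∈ I, ∑ l ∈ J \ I, if l < i then n i * n l else 0)) *
          ((-1 : ℤ) ^ (∑ i ∈ I, n i))) •
        (b I * b (J \ I) -
          ((-1 : ℤ) ^ (((∑ i ∈ I, n i) - 1) * ((∑ l ∈ J \ I, n l) - 1))) •
            (b (J \ I) * b I)) := by
  classical
  set μ := J.min' hJ with hμ
  have hμJ : μ ∈ J := J.min'_mem hJ
  set f : Finset (Fin m) → A := fun I =>
    (((-1 : ℤ) ^ (∑ i ∈ I, ∑ l ∈ J \ I, if l < i then n i * n l else 0)) *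
      ((-1 : ℤ) ^ (∑ i ∈ I, n i))) • (b I * b (J \ I)) with hf
  -- sum of the two E's is the full product
  have hEsum : ∀ I : Finset (Fin m), I ⊆ J →
      (∑ i ∈ I, ∑ l ∈ J \ I, if l < i then n i * n l else 0)
      + (∑ i ∈ J \ I, ∑ l ∈ J \ (J \ I), if l < i then n i * n l else 0)
      = (∑ i ∈ I, n i) * (∑ l ∈ J \ I, n l) := by
    intro I hIJ
    rw [Finset.sdiff_sdiff_eq_self hIJ, Finset.sum_comm (s := J \ I),
      Finset.sum_mul_sum, ← Finset.sum_add_distrib]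
    refine Finset.sum_congr rfl fun i hi => ?_
    rw [← Finset.sum_add_distrib]
    refine Finset.sum_congr rfl fun l hl => ?_
    have hne : i ≠ l := fun h => (Finset.mem_sdiff.1 hl).2 (h ▸ hi)
    rcases hne.lt_or_gt with h | h
    · rw [if_neg (asymm h), if_pos h, zero_add, mul_comm]
    · rw [if_pos h, if_neg (asymm h), add_zero]
  -- pointwise: pairing I with its complement gives the commutator
  have key : ∀ I : Finset (Fin m), I ⊆ J → I ≠ ∅ → I ≠ J →
      f I + f (J \ I) =
      (((-1 : ℤ) ^ (∑ i ∈ I, ∑ l ∈ J \ I, if l < i then n i * n l else 0)) *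
        ((-1 : ℤ) ^ (∑ i ∈ I, n i))) •
      (b I * b (J \ I) -
        ((-1 : ℤ) ^ (((∑ i ∈ I, n i) - 1) * ((∑ l ∈ J \ I, n l) - 1))) •
          (b (J \ I) * b I)) := by
    intro I hIJ hI0 hIJ'
    have hcc : J \ (J \ I) = I := Finset.sdiff_sdiff_eq_self hIJ
    have hL0 : J \ I ≠ ∅ := by
      intro h
      exact hIJ' (Finset.eq_of_subset_of_card_le hIJ (by
        have := Finset.card_sdiff_of_subset hIJ
        rw [h] at this
        simp at this
        omega))
    obtain ⟨i0, hi0⟩ := Finset.nonempty_iff_ne_empty.2 hI0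
    obtain ⟨l0, hl0⟩ := Finset.nonempty_iff_ne_empty.2 hL0
    have ha1 : 1 ≤ ∑ i ∈ I, n i :=
      le_trans (le_trans (by omega) (hn i0)) (Finset.single_le_sum (fun _ _ => Nat.zero_le _) hi0)
    have ha2 : 1 ≤ ∑ l ∈ J \ I, n l :=
      le_trans (le_trans (by omega) (hn l0)) (Finset.single_le_sum (fun _ _ => Nat.zero_le _) hl0)
    set E1 := ∑ i ∈ I, ∑ l ∈ J \ I, if l < i then n i * n l else 0 with hE1
    set a1 := ∑ i ∈ I, n i with ha1'
    set a2 := ∑ l ∈ J \ I, n l with ha2'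
    have hE := hEsum I hIJ
    rw [hf]
    simp only [hcc]
    rw [← hE1, ← ha1', ← ha2']
    -- scalar identity
    have hsign : ((-1 : ℤ) ^ (∑ i ∈ J \ I, ∑ l ∈ I, if l < i then n i * n l else 0)) *
        ((-1 : ℤ) ^ a2)
        = -(((-1 : ℤ) ^ E1) * ((-1 : ℤ) ^ a1) * ((-1 : ℤ) ^ ((a1 - 1) * (a2 - 1)))) := by
      set E2 := ∑ i ∈ J \ I, ∑ l ∈ I, if l < i then n i * n l else 0 with hE2
      rw [← pow_add, ← pow_add, ← pow_add]
      rw [hcc] at hE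
      exact neg_pow_helper _ _ (odd_helper E1 E2 a1 a2 hE ha1 ha2)
    rw [hsign, smul_sub, smul_smul, neg_smul, mul_assoc, sub_eq_add_neg]
  -- the whole goal in terms of f
  show ∑ I ∈ J.powerset.filter (fun I => I ≠ ∅ ∧ I ≠ J), f I = _
  rw [← Finset.sum_filter_add_sum_filter_not
    (J.powerset.filter (fun I => I ≠ ∅ ∧ I ≠ J)) (fun I => μ ∈ I) f]
  have hS1 : (J.powerset.filter (fun I => I ≠ ∅ ∧ I ≠ J)).filter (fun I => μ ∈ I)
      = J.powerset.filter (fun I => I ≠ ∅ ∧ I ≠ J ∧ μ ∈ I) := by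
    simp only [Finset.filter_filter, and_assoc]
  have hmem : ∀ I ∈ J.powerset.filter (fun I => I ≠ ∅ ∧ I ≠ J ∧ μ ∈ I),
      J \ I ∈ (J.powerset.filter (fun I => I ≠ ∅ ∧ I ≠ J)).filter (fun I => ¬ μ ∈ I) := by
    intro I hI
    simp only [Finset.mem_filter, Finset.mem_powerset] at hI ⊢
    obtain ⟨hIJ, hI0, hIJ', hμI⟩ := hI
    refine ⟨⟨Finset.sdiff_subset, ?_, ?_⟩, ?_⟩
    · intro h
      exact hIJ' (Finset.Subset.antisymm hIJ (Finset.sdiff_eq_empty_iff_subset.1 h))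
    · intro h
      have : μ ∈ J \ I := by rw [h]; exact hμJ
      exact (Finset.mem_sdiff.1 this).2 hμI
    · simp [Finset.mem_sdiff, hμI, hμJ]
  have hmem' : ∀ I ∈ (J.powerset.filter (fun I => I ≠ ∅ ∧ I ≠ J)).filter (fun I => ¬ μ ∈ I),
      J \ I ∈ J.powerset.filter (fun I => I ≠ ∅ ∧ I ≠ J ∧ μ ∈ I) := by
    intro I hI
    simp only [Finset.mem_filter, Finset.mem_powerset] at hI ⊢
    obtain ⟨⟨hIJ, hI0, hIJ'⟩, hμI⟩ := hI
    refine ⟨Finset.sdiff_subset, ?_, ?_, Finset.mem_sdiff.2 ⟨hμJ, hμI⟩⟩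
    · intro h
      exact hIJ' (Finset.Subset.antisymm hIJ (Finset.sdiff_eq_empty_iff_subset.1 h))
    · intro h
      obtain ⟨x, hx⟩ := Finset.nonempty_iff_ne_empty.2 hI0
      exact (Finset.mem_sdiff.1 (h ▸ hIJ hx)).2 hx
  have hS2 : ∑ I ∈ (J.powerset.filter (fun I => I ≠ ∅ ∧ I ≠ J)).filter (fun I => ¬ μ ∈ I), f I
      = ∑ I ∈ J.powerset.filter (fun I => I ≠ ∅ ∧ I ≠ J ∧ μ ∈ I), f (J \ I) := by
    refine (Finset.sum_nbij' (f := fun I => f (J \ I)) (g := f)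
      (fun I => J \ I) (fun I => J \ I) hmem hmem' ?_ ?_ (fun a _ => rfl)).symm
    · intro I hI
      simp only [Finset.mem_filter, Finset.mem_powerset] at hI
      exact Finset.sdiff_sdiff_eq_self hI.1
    · intro I hI
      simp only [Finset.mem_filter, Finset.mem_powerset] at hI
      exact Finset.sdiff_sdiff_eq_self hI.1.1
  rw [hS1, hS2, ← Finset.sum_add_distrib]
  refine Finset.sum_congr rfl fun I hI => ?_
  simp only [Finset.mem_filter, Finset.mem_powerset] at hI
  exact key I hI.1 hI.2.1 hI.2.2.1
end

section
/- In the dg algebra (T(a_1,...,a_{n−1}), ∂) with |a_i| = 2i−1, ∂a_i = Σ_{p=1}^{i−1} a_p a_{i−p}, the element v = a_1 a_{n−1} + a_2 a_{n−2} + ... + a_{n−1} a_1 of degree 2n−2 is a cycle: ∂v = 0. -/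
/-!
Applying the derivation to `v` produces, by the odd Leibniz rule, the sum of all triple products
`a_i a_j a_k` with `i + j + k = n` twice: once bracketed as `(a_i a_j) a_k`, coming from `∂a_p`
on the left factor, and once as `a_i (a_j a_k)`, coming with a minus sign from `∂a_{n-p}` on the
right factor. Associativity makes the two cancel.
-/

open Finset

/-- Both sides run over the compositions `n = i + j + k` into positive parts. -/
theorem Finset.sum_Ioo_sum_Ioo_compositions {M : Type*} [AddCommMonoid M] (n : ℕ)
    (f : ℕ → ℕ → ℕ → M) :
    ∑ p ∈ Ioo 0 n, ∑ q ∈ Ioo 0 p, f q (p - q) (n - p) =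
      ∑ p ∈ Ioo 0 n, ∑ q ∈ Ioo 0 (n - p), f p q (n - p - q) := by
  rw [sum_sigma', sum_sigma']
  refine sum_nbij' (fun x => ⟨x.2, x.1 - x.2⟩) (fun x => ⟨x.1 + x.2, x.1⟩) ?_ ?_ ?_ ?_ ?_ <;>
    rintro ⟨p, q⟩ h <;> simp only [mem_sigma, mem_Ioo] at h
  · simp only [mem_sigma, mem_Ioo]; omega
  · simp only [mem_sigma, mem_Ioo]; omega
  · simp only [Sigma.mk.inj_iff]; exact ⟨by omega, heq_of_eq (by omega)⟩
  · simp only [Sigma.mk.inj_iff]; exact ⟨trivial, heq_of_eq (by omega)⟩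
  · simp only [show n - q - (p - q) = n - p by omega]

theorem map_sum_mul_eq_zero_of_odd_leibniz {A : Type*} [Ring A] (d : A →+ A) (a : ℕ → A) (n : ℕ)
    (hleib : ∀ p ∈ Ioo 0 n, ∀ y, d (a p * y) = d (a p) * y - a p * d y)
    (hda : ∀ p ∈ Ioo 0 n, d (a p) = ∑ q ∈ Ioo 0 p, a q * a (p - q)) :
    d (∑ p ∈ Ioo 0 n, a p * a (n - p)) = 0 := by
  have hterm : ∀ p ∈ Ioo 0 n, d (a p * a (n - p)) =
      ∑ q ∈ Ioo 0 p, a q * a (p - q) * a (n - p) -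
        ∑ q ∈ Ioo 0 (n - p), a p * (a q * a (n - p - q)) := by
    intro p hp
    have hnp : n - p ∈ Ioo 0 n := by simp only [mem_Ioo] at hp ⊢; omega
    rw [hleib p hp, hda p hp, hda (n - p) hnp, sum_mul, mul_sum]
  rw [map_sum, sum_congr rfl hterm, sum_sub_distrib, sub_eq_zero]
  simpa only [mul_assoc] using
    sum_Ioo_sum_Ioo_compositions n (fun i j k => a i * a j * a k)

theorem adamsHilton_CPn_top_cycle_general
    (n : ℕ)
    (A : Type*) [Ring A] (d : A →ₗ[ℤ] A)
    (Hom : ℕ → Submodule ℤ A) (a : ℕ → A)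
    (hLeib : ∀ (i : ℕ) (x y : A), x ∈ Hom i →
      d (x * y) = d x * y + ((-1 : ℤ) ^ i) • (x * d y))
    (hdeg : ∀ i, 1 ≤ i → i ≤ n - 1 → a i ∈ Hom (2 * i - 1))
    (hda1 : d (a 1) = 0)
    (hda : ∀ i, 2 ≤ i → i ≤ n - 1 →
      d (a i) = ∑ p ∈ Finset.Ioo 0 i, a p * a (i - p)) :
    d (∑ p ∈ Finset.Ioo 0 n, a p * a (n - p)) = 0 := by
  refine map_sum_mul_eq_zero_of_odd_leibniz d.toAddMonoidHom a n (fun p hp y => ?_) (fun p hp => ?_) <;>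
    simp only [mem_Ioo] at hp
  · have hsign : (-1 : ℤ) ^ (2 * p - 1) = -1 := Odd.neg_one_pow ⟨p - 1, by omega⟩
    simp [hLeib _ _ y (hdeg p hp.1 (by omega)), hsign, sub_eq_add_neg]
  · obtain rfl | hp2 : p = 1 ∨ 2 ≤ p := by omega
    · exact hda1.trans (sum_eq_zero fun q hq => by simp only [mem_Ioo] at hq; omega).symm
    · exact hda p hp2 (by omega)

/-- In the dg algebra `(T(a_1,...,a_{n−1}), ∂)` with `|a_i| = 2i−1`,
`∂a_1 = 0`, `∂a_i = Σ_{p=1}^{i−1} a_p a_{i−p}` (graded derivation), the element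
`v = a_1 a_{n−1} + a_2 a_{n−2} + ⋯ + a_{n−1} a_1` of degree `2n−2` is a cycle:
`∂v = 0`. -/
theorem adamsHilton_CPn_top_cycle
    (n : ℕ) (hn : 2 ≤ n)
    (A : Type*) [Ring A] (d : A →ₗ[ℤ] A)
    (Hom : ℕ → Submodule ℤ A) (a : ℕ → A)
    (hmul : ∀ (i j : ℕ) (x y : A), x ∈ Hom i → y ∈ Hom j → x * y ∈ Hom (i + j))
    (hLeib : ∀ (i : ℕ) (x y : A), x ∈ Hom i →
      d (x * y) = d x * y + ((-1 : ℤ) ^ i) • (x * d y))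
    (hdeg : ∀ i, 1 ≤ i → i ≤ n - 1 → a i ∈ Hom (2 * i - 1))
    (hda1 : d (a 1) = 0)
    (hda : ∀ i, 2 ≤ i → i ≤ n - 1 →
      d (a i) = ∑ p ∈ Finset.Ioo 0 i, a p * a (i - p)) :
    d (∑ p ∈ Finset.Ioo 0 n, a p * a (n - p)) = 0 :=
  adamsHilton_CPn_top_cycle_general n A d Hom a hLeib hdeg hda1 hda
end

section
/- In the dg algebra (T(c_J : J ⊆ {1,2,3,4}, J ≠ ∅), ∂) with |c_J| = 2|J|−1 and ∂c_J = Σ_{I⊔L=J} c_I ⊗ c_L, the element z = [c_{124}, c_3] + [c_{134}, c_2] + [c_1, c_{234}] + [c_{12}, c_{34}] + [c_{13}, c_{24}] + [c_{14}, c_{23}] of degree 6 satisfies ∂z = −[w, c_4], where w = [c_1, c_{23}] + [c_{12}, c_3] + [c_{13}, c_2] and [x,y] = xy + yx. -/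
/-- The commutator `[x,y] = xy + yx` of odd-degree elements. -/
def oddBracket {A : Type*} [Ring A] (x y : A) : A := x * y + y * x

/-- In the dg algebra `(T(c_J : ∅ ≠ J ⊆ {1,2,3,4}), ∂)` with `|c_J| = 2|J|−1` and
`∂c_J = Σ_{I⊔L=J, I,L≠∅} c_I ⊗ c_L` (graded derivation), the degree-6 element
`z = [c_{124},c_3] + [c_{134},c_2] + [c_1,c_{234}] + [c_{12},c_{34}]
   + [c_{13},c_{24}] + [c_{14},c_{23}]`
satisfies `∂z = −[w, c_4]`, where `w = [c_1,c_{23}] + [c_{12},c_3] + [c_{13},c_2]`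
(here `[x,y] = xy + yx` for the odd-degree generators, and `[w, c₄]` is the
graded commutator `w c₄ − c₄ w` of the even-degree element `w` with `c₄`).
Vertices `1,2,3,4` are renamed `0,1,2,3`. -/
theorem adamsHilton_S5xS2_differential_identity
    (A : Type*) [Ring A] (d : A →ₗ[ℤ] A)
    (Hom : ℕ → Submodule ℤ A) (c : Finset (Fin 4) → A)
    (hmul : ∀ (i j : ℕ) (x y : A), x ∈ Hom i → y ∈ Hom j → x * y ∈ Hom (i + j))
    (hLeib : ∀ (i : ℕ) (x y : A), x ∈ Hom i →
      d (x * y) = d x * y + ((-1 : ℤ) ^ i) • (x * d y))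
    (hdeg : ∀ J : Finset (Fin 4), J ≠ ∅ → c J ∈ Hom (2 * J.card - 1))
    (hd : ∀ J : Finset (Fin 4), J ≠ ∅ →
      d (c J) = ∑ I ∈ J.powerset.filter (fun I => I ≠ ∅ ∧ I ≠ J),
        c I * c (J \ I)) :
    d (oddBracket (c {0, 1, 3}) (c {2}) + oddBracket (c {0, 2, 3}) (c {1})
        + oddBracket (c {0}) (c {1, 2, 3}) + oddBracket (c {0, 1}) (c {2, 3})
        + oddBracket (c {0, 2}) (c {1, 3}) + oddBracket (c {0, 3}) (c {1, 2}))
      = -((oddBracket (c {0}) (c {1, 2}) + oddBracket (c {0, 1}) (c {2})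
            + oddBracket (c {0, 2}) (c {1})) * c {3}
          - c {3} * (oddBracket (c {0}) (c {1, 2}) + oddBracket (c {0, 1}) (c {2})
            + oddBracket (c {0, 2}) (c {1}))) := by
  have hodd : ∀ (i : ℕ) (x y : A), x ∈ Hom i → Odd i →
      d (x * y) = d x * y - x * d y := by
    intro i x y hx hi
    rw [hLeib i x y hx, Odd.neg_one_pow hi, neg_one_zsmul, ← sub_eq_add_neg]
  have dbr : ∀ (i j : ℕ) (x y : A), x ∈ Hom i → y ∈ Hom j → Odd i → Odd j →
      d (oddBracket x y) = (d x * y - x * d y) + (d y * x - y * d x) := by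
    intro i j x y hx hy hi hj
    unfold oddBracket
    rw [map_add, hodd i x y hx hi, hodd j y x hy hj]
  have h0 : c {0} ∈ Hom 1 := hdeg {0} (by decide)
  have h1 : c {1} ∈ Hom 1 := hdeg {1} (by decide)
  have h2 : c {2} ∈ Hom 1 := hdeg {2} (by decide)
  have h01 : c {0, 1} ∈ Hom 3 := hdeg {0, 1} (by decide)
  have h02 : c {0, 2} ∈ Hom 3 := hdeg {0, 2} (by decide)
  have h03 : c {0, 3} ∈ Hom 3 := hdeg {0, 3} (by decide)
  have h013 : c {0, 1, 3} ∈ Hom 5 := hdeg {0, 1, 3} (by decide)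
  have h023 : c {0, 2, 3} ∈ Hom 5 := hdeg {0, 2, 3} (by decide)
  have ds0 : d (c {0}) = 0 := by
    rw [hd {0} (by decide), show Finset.filter (fun I => I ≠ ∅ ∧ I ≠ ({0} : Finset (Fin 4))) (Finset.powerset {0}) = (∅ : Finset (Finset (Fin 4))) from by decide, Finset.sum_empty]
  have ds1 : d (c {1}) = 0 := by
    rw [hd {1} (by decide), show Finset.filter (fun I => I ≠ ∅ ∧ I ≠ ({1} : Finset (Fin 4))) (Finset.powerset {1}) = (∅ : Finset (Finset (Fin 4))) from by decide, Finset.sum_empty]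
  have ds2 : d (c {2}) = 0 := by
    rw [hd {2} (by decide), show Finset.filter (fun I => I ≠ ∅ ∧ I ≠ ({2} : Finset (Fin 4))) (Finset.powerset {2}) = (∅ : Finset (Finset (Fin 4))) from by decide, Finset.sum_empty]
  have ds3 : d (c {3}) = 0 := by
    rw [hd {3} (by decide), show Finset.filter (fun I => I ≠ ∅ ∧ I ≠ ({3} : Finset (Fin 4))) (Finset.powerset {3}) = (∅ : Finset (Finset (Fin 4))) from by decide, Finset.sum_empty]
  have d01 : d (c {0, 1}) = c {0} * c {1} + c {1} * c {0} := by
    rw [hd {0, 1} (by decide), show Finset.filter (fun I => I ≠ ∅ ∧ I ≠ ({0, 1} : Finset (Fin 4))) (Finset.powerset {0, 1}) = ({{0}, {1}} : Finset (Finset (Fin 4))) from by decide, Finset.sum_insert (by decide), Finset.sum_singleton, show ({0, 1} : Finset (Fin 4)) \ {0} = {1} from by decide, show ({0, 1} : Finset (Fin 4)) \ {1} = {0} from by decide]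
  have d02 : d (c {0, 2}) = c {0} * c {2} + c {2} * c {0} := by
    rw [hd {0, 2} (by decide), show Finset.filter (fun I => I ≠ ∅ ∧ I ≠ ({0, 2} : Finset (Fin 4))) (Finset.powerset {0, 2}) = ({{0}, {2}} : Finset (Finset (Fin 4))) from by decide, Finset.sum_insert (by decide), Finset.sum_singleton, show ({0, 2} : Finset (Fin 4)) \ {0} = {2} from by decide, show ({0, 2} : Finset (Fin 4)) \ {2} = {0} from by decide]
  have d03 : d (c {0, 3}) = c {0} * c {3} + c {3} * c {0} := by
    rw [hd {0, 3} (by decide), show Finset.filter (fun I => I ≠ ∅ ∧ I ≠ ({0, 3} : Finset (Fin 4))) (Finset.powerset {0, 3}) = ({{0}, {3}} : Finset (Finset (Fin 4))) from by decide, Finset.sum_insert (by decide), Finset.sum_singleton, show ({0, 3} : Finset (Fin 4)) \ {0} = {3} from by decide, show ({0, 3} : Finset (Fin 4)) \ {3} = {0} from by decide]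
  have d12 : d (c {1, 2}) = c {1} * c {2} + c {2} * c {1} := by
    rw [hd {1, 2} (by decide), show Finset.filter (fun I => I ≠ ∅ ∧ I ≠ ({1, 2} : Finset (Fin 4))) (Finset.powerset {1, 2}) = ({{1}, {2}} : Finset (Finset (Fin 4))) from by decide, Finset.sum_insert (by decide), Finset.sum_singleton, show ({1, 2} : Finset (Fin 4)) \ {1} = {2} from by decide, show ({1, 2} : Finset (Fin 4)) \ {2} = {1} from by decide]
  have d13 : d (c {1, 3}) = c {1} * c {3} + c {3} * c {1} := by
    rw [hd {1, 3} (by decide), show Finset.filter (fun I => I ≠ ∅ ∧ I ≠ ({1, 3} : Finset (Fin 4))) (Finset.powerset {1, 3}) = ({{1}, {3}} : Finset (Finset (Fin 4))) from by decide, Finset.sum_insert (by decide), Finset.sum_singleton, show ({1, 3} : Finset (Fin 4)) \ {1} = {3} from by decide, show ({1, 3} : Finset (Fin 4)) \ {3} = {1} from by decide]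
  have d23 : d (c {2, 3}) = c {2} * c {3} + c {3} * c {2} := by
    rw [hd {2, 3} (by decide), show Finset.filter (fun I => I ≠ ∅ ∧ I ≠ ({2, 3} : Finset (Fin 4))) (Finset.powerset {2, 3}) = ({{2}, {3}} : Finset (Finset (Fin 4))) from by decide, Finset.sum_insert (by decide), Finset.sum_singleton, show ({2, 3} : Finset (Fin 4)) \ {2} = {3} from by decide, show ({2, 3} : Finset (Fin 4)) \ {3} = {2} from by decide]
  have d013 : d (c {0, 1, 3}) = c {0} * c {1, 3} + c {1} * c {0, 3} + c {3} * c {0, 1} + c {0, 1} * c {3} + c {0, 3} * c {1} + c {1, 3} * c {0} := by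
    rw [hd {0, 1, 3} (by decide), show Finset.filter (fun I => I ≠ ∅ ∧ I ≠ ({0, 1, 3} : Finset (Fin 4))) (Finset.powerset {0, 1, 3}) = ({{0}, {1}, {3}, {0, 1}, {0, 3}, {1, 3}} : Finset (Finset (Fin 4))) from by decide, Finset.sum_insert (by decide), Finset.sum_insert (by decide), Finset.sum_insert (by decide), Finset.sum_insert (by decide), Finset.sum_insert (by decide), Finset.sum_singleton, show ({0, 1, 3} : Finset (Fin 4)) \ {0} = {1, 3} from by decide, show ({0, 1, 3} : Finset (Fin 4)) \ {1} = {0, 3} from by decide, show ({0, 1, 3} : Finset (Fin 4)) \ {3} = {0, 1} from by decide, show ({0, 1, 3} : Finset (Fin 4)) \ {0, 1} = {3} from by decide, show ({0, 1, 3} : Finset (Fin 4)) \ {0, 3} = {1} from by decide, show ({0, 1, 3} : Finset (Fin 4)) \ {1, 3} = {0} from by decide]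
    abel
  have d023 : d (c {0, 2, 3}) = c {0} * c {2, 3} + c {2} * c {0, 3} + c {3} * c {0, 2} + c {0, 2} * c {3} + c {0, 3} * c {2} + c {2, 3} * c {0} := by
    rw [hd {0, 2, 3} (by decide), show Finset.filter (fun I => I ≠ ∅ ∧ I ≠ ({0, 2, 3} : Finset (Fin 4))) (Finset.powerset {0, 2, 3}) = ({{0}, {2}, {3}, {0, 2}, {0, 3}, {2, 3}} : Finset (Finset (Fin 4))) from by decide, Finset.sum_insert (by decide), Finset.sum_insert (by decide), Finset.sum_insert (by decide), Finset.sum_insert (by decide), Finset.sum_insert (by decide), Finset.sum_singleton, show ({0, 2, 3} : Finset (Fin 4)) \ {0} = {2, 3} from by decide, show ({0, 2, 3} : Finset (Fin 4)) \ {2} = {0, 3} from by decide, show ({0, 2, 3} : Finset (Fin 4)) \ {3} = {0, 2} from by decide, show ({0, 2, 3} : Finset (Fin 4)) \ {0, 2} = {3} from by decide, show ({0, 2, 3} : Finset (Fin 4)) \ {0, 3} = {2} from by decide, show ({0, 2, 3} : Finset (Fin 4)) \ {2, 3} = {0} from by decide]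
    abel
  have d123 : d (c {1, 2, 3}) = c {1} * c {2, 3} + c {2} * c {1, 3} + c {3} * c {1, 2} + c {1, 2} * c {3} + c {1, 3} * c {2} + c {2, 3} * c {1} := by
    rw [hd {1, 2, 3} (by decide), show Finset.filter (fun I => I ≠ ∅ ∧ I ≠ ({1, 2, 3} : Finset (Fin 4))) (Finset.powerset {1, 2, 3}) = ({{1}, {2}, {3}, {1, 2}, {1, 3}, {2, 3}} : Finset (Finset (Fin 4))) from by decide, Finset.sum_insert (by decide), Finset.sum_insert (by decide), Finset.sum_insert (by decide), Finset.sum_insert (by decide), Finset.sum_insert (by decide), Finset.sum_singleton, show ({1, 2, 3} : Finset (Fin 4)) \ {1} = {2, 3} from by decide, show ({1, 2, 3} : Finset (Fin 4)) \ {2} = {1, 3} from by decide, show ({1, 2, 3} : Finset (Fin 4)) \ {3} = {1, 2} from by decide, show ({1, 2, 3} : Finset (Fin 4)) \ {1, 2} = {3} from by decide, show ({1, 2, 3} : Finset (Fin 4)) \ {1, 3} = {2} from by decide, show ({1, 2, 3} : Finset (Fin 4)) \ {2, 3} = {1} from by decide]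
    abel
  rw [map_add, map_add, map_add, map_add, map_add,
    dbr 5 1 _ _ h013 h2 (by decide) (by decide),
    dbr 5 1 _ _ h023 h1 (by decide) (by decide),
    dbr 1 5 _ _ h0 (hdeg {1, 2, 3} (by decide)) (by decide) (by decide),
    dbr 3 3 _ _ h01 (hdeg {2, 3} (by decide)) (by decide) (by decide),
    dbr 3 3 _ _ h02 (hdeg {1, 3} (by decide)) (by decide) (by decide),
    dbr 3 3 _ _ h03 (hdeg {1, 2} (by decide)) (by decide) (by decide),
    ds0, ds1, ds2, d01, d02, d03, d12, d13, d23, d013, d023, d123]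
  unfold oddBracket
  noncomm_ring
end

section
/- In the dg algebra Cobar Z⟨K⟩, where K = ∂Δ(∂Δ(1,2,3), 4, 5) is the substitution complex, the element [χ_{123}, χ_{45}] + [χ_{1234}, χ_5] + [χ_{1235}, χ_4] (formed in the larger algebra Cobar Z⟨Δ(1,2,3,4,5)⟩) has its differential lying in the subalgebra Cobar Z⟨K⟩, i.e., every tensor word appearing in −∂([χ_{123}, χ_{45}] + [χ_{1234}, χ_5] + [χ_{1235}, χ_4]) involves only generators χ_σ with supp(σ) ∈ K. -/
/-- The substitution complex `K = ∂Δ(∂Δ(1,2,3),4,5)` on `{1,...,5}` (vertices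
renamed `0,...,4`), described by its maximal simplices. -/
def substK : Set (Finset (Fin 5)) :=
  {J | J ⊆ {0, 1, 3} ∨ J ⊆ {0, 2, 3} ∨ J ⊆ {1, 2, 3} ∨ J ⊆ {0, 1, 4} ∨
       J ⊆ {0, 2, 4} ∨ J ⊆ {1, 2, 4} ∨ J ⊆ {0, 1, 2} ∨ J ⊆ {3, 4}}

/-- In `Cobar ℤ⟨Δ(1,2,3,4,5)⟩` (the free algebra on generators `χ_σ` for
nonempty multisets `σ` on `{1,...,5}` with `∂χ_σ = Σ_{σ=τ⊔τ'} χ_τ χ_{τ'}`),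
the differential of `[χ_{123},χ_{45}] + [χ_{1234},χ_5] + [χ_{1235},χ_4]`
(with a minus sign, as in the paper) lies in the subalgebra
`Cobar ℤ⟨K⟩` for `K = ∂Δ(∂Δ(1,2,3),4,5)`: every tensor word in it involves
only generators `χ_σ` with `supp σ ∈ K`. -/
theorem whitehead_product_boundary_in_subalgebra
    (A : Type*) [Ring A] (d : A →ₗ[ℤ] A)
    (Hom : ℕ → Submodule ℤ A) (χ : Multiset (Fin 5) → A)
    (hmul : ∀ (i j : ℕ) (x y : A), x ∈ Hom i → y ∈ Hom j → x * y ∈ Hom (i + j))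
    (hLeib : ∀ (i : ℕ) (x y : A), x ∈ Hom i →
      d (x * y) = d x * y + ((-1 : ℤ) ^ i) • (x * d y))
    (hdeg : ∀ σ : Multiset (Fin 5), σ ≠ 0 →
      χ σ ∈ Hom (2 * Multiset.card σ - 1))
    (hd : ∀ σ : Multiset (Fin 5), σ.Nodup → σ ≠ 0 →
      d (χ σ) = ∑ I ∈ σ.toFinset.powerset.filter
          (fun I => I ≠ ∅ ∧ I.val ≠ σ),
        χ I.val * χ (σ - I.val)) :
    -(d (oddBracket (χ {0, 1, 2}) (χ {3, 4})
          + oddBracket (χ {0, 1, 2, 3}) (χ {4})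
          + oddBracket (χ {0, 1, 2, 4}) (χ {3})))
      ∈ Algebra.adjoin ℤ
          {x : A | ∃ σ : Multiset (Fin 5), σ ≠ 0 ∧ σ.toFinset ∈ substK ∧ x = χ σ} := by
  set S := Algebra.adjoin ℤ
      {x : A | ∃ σ : Multiset (Fin 5), σ ≠ 0 ∧ σ.toFinset ∈ substK ∧ x = χ σ} with hS
  have hgen : ∀ σ : Multiset (Fin 5), σ ≠ 0 → σ.toFinset ∈ substK → χ σ ∈ S := by
    intro σ h1 h2
    exact Algebra.subset_adjoin ⟨σ, h1, h2, rfl⟩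
  -- key lemma: d (χ σ) ∈ S provided all the pieces have support in K
  have key : ∀ σ : Multiset (Fin 5), σ.Nodup → σ ≠ 0 →
      (∀ I ∈ σ.toFinset.powerset.filter (fun I => I ≠ ∅ ∧ I.val ≠ σ),
        (I : Finset (Fin 5)) ∈ substK ∧ (σ.toFinset \ I) ∈ substK) →
      d (χ σ) ∈ S := by
    intro σ hn h0 hI
    rw [hd σ hn h0]
    apply Subalgebra.sum_mem
    intro I hIf
    obtain ⟨hK1, hK2⟩ := hI I hIf
    simp only [Finset.mem_filter, Finset.mem_powerset] at hIf
    obtain ⟨hsub, hne, hneq⟩ := hIf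
    have hval : σ.toFinset.val = σ := by
      rw [Multiset.toFinset_val, Multiset.dedup_eq_self.mpr hn]
    have hle : I.val ≤ σ := by
      rw [← hval]; exact Finset.val_le_iff.mpr hsub
    have hsd : σ - I.val = (σ.toFinset \ I).val := by
      rw [Finset.sdiff_val, hval]
    apply mul_mem
    · apply hgen I.val
      · simpa [Finset.val_eq_zero] using hne
      · rwa [Finset.val_toFinset]
    · apply hgen (σ - I.val)
      · intro hz
        exact hneq (le_antisymm hle (tsub_eq_zero_iff_le.mp hz))
      · rw [hsd, Finset.val_toFinset]; exact hK2
  have mem012 : d (χ {0, 1, 2}) ∈ S := by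
    apply key _ (by decide) (by decide)
    simp only [substK, Set.mem_setOf_eq]
    decide
  have mem34 : d (χ {3, 4}) ∈ S := by
    apply key _ (by decide) (by decide)
    simp only [substK, Set.mem_setOf_eq]
    decide
  have mem0123 : d (χ {0, 1, 2, 3}) ∈ S := by
    apply key _ (by decide) (by decide)
    simp only [substK, Set.mem_setOf_eq]
    decide
  have mem0124 : d (χ {0, 1, 2, 4}) ∈ S := by
    apply key _ (by decide) (by decide)
    simp only [substK, Set.mem_setOf_eq]
    decide
  have d3 : d (χ {3}) = 0 := by
    rw [hd _ (by decide) (by decide),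
      show (({3} : Multiset (Fin 5)).toFinset.powerset.filter
        (fun I => I ≠ ∅ ∧ I.val ≠ ({3} : Multiset (Fin 5)))) = ∅ from by decide,
      Finset.sum_empty]
  have d4 : d (χ {4}) = 0 := by
    rw [hd _ (by decide) (by decide),
      show (({4} : Multiset (Fin 5)).toFinset.powerset.filter
        (fun I => I ≠ ∅ ∧ I.val ≠ ({4} : Multiset (Fin 5)))) = ∅ from by decide,
      Finset.sum_empty]
  have g012 : χ ({0, 1, 2} : Multiset (Fin 5)) ∈ S := by
    apply hgen _ (by decide)
    simp only [substK, Set.mem_setOf_eq]; decide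
  have g34 : χ ({3, 4} : Multiset (Fin 5)) ∈ S := by
    apply hgen _ (by decide)
    simp only [substK, Set.mem_setOf_eq]; decide
  have g3 : χ ({3} : Multiset (Fin 5)) ∈ S := by
    apply hgen _ (by decide)
    simp only [substK, Set.mem_setOf_eq]; decide
  have g4 : χ ({4} : Multiset (Fin 5)) ∈ S := by
    apply hgen _ (by decide)
    simp only [substK, Set.mem_setOf_eq]; decide
  -- differentials of the brackets
  apply neg_mem
  rw [map_add, map_add]
  apply add_mem
  apply add_mem
  · -- d [χ012, χ34]
    rw [oddBracket, map_add,
      hLeib _ _ _ (hdeg ({0,1,2} : Multiset (Fin 5)) (by decide)),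
      hLeib _ _ _ (hdeg ({3,4} : Multiset (Fin 5)) (by decide))]
    apply add_mem <;> apply add_mem
    · exact mul_mem mem012 g34
    · exact Subalgebra.smul_mem _ (mul_mem g012 mem34) _
    · exact mul_mem mem34 g012
    · exact Subalgebra.smul_mem _ (mul_mem g34 mem012) _
  · -- d [χ0123, χ4]
    rw [oddBracket, map_add,
      hLeib _ _ _ (hdeg ({0,1,2,3} : Multiset (Fin 5)) (by decide)),
      hLeib _ _ _ (hdeg ({4} : Multiset (Fin 5)) (by decide)), d4]
    simp only [mul_zero, smul_zero, add_zero, zero_mul, zero_add]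
    apply add_mem
    · exact mul_mem mem0123 g4
    · exact Subalgebra.smul_mem _ (mul_mem g4 mem0123) _
  · -- d [χ0124, χ3]
    rw [oddBracket, map_add,
      hLeib _ _ _ (hdeg ({0,1,2,4} : Multiset (Fin 5)) (by decide)),
      hLeib _ _ _ (hdeg ({3} : Multiset (Fin 5)) (by decide)), d3]
    simp only [mul_zero, smul_zero, add_zero, zero_mul, zero_add]
    apply add_mem
    · exact mul_mem mem0124 g3
    · exact Subalgebra.smul_mem _ (mul_mem g3 mem0124) _
end
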